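/- Among states of class E₀, the states maximizing m(ρ) for fixed linear entropy s∈[0,2/3] lie on the curve s = (2/3)(1-c²) and are the states ρ_MVB with ρ₂₂=ρ₃₃=1/2, ρ₂₃=(√(β-1)/2)e^{iθ}, ρ₃₂=(√(β-1)/2)e^{-iθ}, all other entries zero, with β∈[1,2]; moreover m(ρ_MVB)=β. -/

import Mathlib

open Matrix Kronecker Complex ComplexOrder

noncomputable section
open scoped Classical

/-- Pauli matrices. -/
def pauli : Fin 3 → Matrix (Fin 2) (Fin 2) ℂ
  | 0 => !![0, 1; 1, 0]
  | 1 => !![0, -Complex.I; Complex.I, 0]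
  | 2 => !![1, 0; 0, -1]

/-- Kronecker product of two one-qubit operators, reindexed to a 4×4 matrix. -/
def kron4 (A B : Matrix (Fin 2) (Fin 2) ℂ) : Matrix (Fin 4) (Fin 4) ℂ :=
  Matrix.reindex finProdFinEquiv finProdFinEquiv (A ⊗ₖ B)

/-- A density matrix: positive semidefinite with unit trace. -/
def IsDensity {n : ℕ} (ρ : Matrix (Fin n) (Fin n) ℂ) : Prop :=
  ρ.PosSemidef ∧ ρ.trace = 1

/-- The spin-flipped matrix ρ̃ = (σ₂⊗σ₂) ρ̄ (σ₂⊗σ₂). -/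
def tildeMat (ρ : Matrix (Fin 4) (Fin 4) ℂ) : Matrix (Fin 4) (Fin 4) ℂ :=
  kron4 (pauli 1) (pauli 1) * ρ.map (starRingEnd ℂ) * kron4 (pauli 1) (pauli 1)

/-- Positive square root of a positive semidefinite matrix (0 otherwise). -/
def msqrt {n : ℕ} (A : Matrix (Fin n) (Fin n) ℂ) : Matrix (Fin n) (Fin n) ℂ :=
  if h : A.PosSemidef then
    (h.1.eigenvectorUnitary : Matrix (Fin n) (Fin n) ℂ) *
      Matrix.diagonal ((↑) ∘ (fun x : ℝ => Real.sqrt x) ∘ h.1.eigenvalues) *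
      (star h.1.eigenvectorUnitary : Matrix (Fin n) (Fin n) ℂ)
  else 0

/-- ρ̂ = √(√ρ ρ̃ √ρ). -/
def hatMat (ρ : Matrix (Fin 4) (Fin 4) ℂ) : Matrix (Fin 4) (Fin 4) ℂ :=
  msqrt (msqrt ρ * tildeMat ρ * msqrt ρ)

/-- Eigenvalues of a Hermitian matrix (0 otherwise). -/
def evalsC {n : ℕ} (A : Matrix (Fin n) (Fin n) ℂ) : Fin n → ℝ :=
  if h : A.IsHermitian then h.eigenvalues else 0

/-- The concurrence C(ρ) = max(0, 2 λ_max(ρ̂) − tr ρ̂). -/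
def concurrence (ρ : Matrix (Fin 4) (Fin 4) ℂ) : ℝ :=
  max 0 (2 * (⨆ i, evalsC (hatMat ρ) i) - ∑ i, evalsC (hatMat ρ) i)

/-- Correlation matrix T_ρ with entries tr(ρ σₙ⊗σₘ). -/
def Tmat (ρ : Matrix (Fin 4) (Fin 4) ℂ) : Matrix (Fin 3) (Fin 3) ℝ :=
  fun n m => ((ρ * kron4 (pauli n) (pauli m)).trace).re

/-- U_ρ = T_ρᵀ T_ρ. -/
def Umat (ρ : Matrix (Fin 4) (Fin 4) ℂ) : Matrix (Fin 3) (Fin 3) ℝ :=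
  (Tmat ρ)ᵀ * Tmat ρ

/-- Eigenvalues of a real symmetric matrix (0 otherwise). -/
def evalsR {n : ℕ} (A : Matrix (Fin n) (Fin n) ℝ) : Fin n → ℝ :=
  if h : A.IsHermitian then h.eigenvalues else 0

/-- The Horodecki quantity m(ρ) = max_{j<k} (u_j + u_k). -/
def mval (ρ : Matrix (Fin 4) (Fin 4) ℂ) : ℝ :=
  (Finset.univ.filter (fun p : Fin 3 × Fin 3 => p.1 < p.2)).sup'
    (by decide) (fun p => evalsR (Umat ρ) p.1 + evalsR (Umat ρ) p.2)

/-- Normalized linear entropy S_L(ρ) = (4/3)(1 − tr ρ²). -/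
def linEntropy (ρ : Matrix (Fin 4) (Fin 4) ℂ) : ℝ :=
  (4/3) * (1 - ((ρ * ρ).trace).re)

/-- The class E₀ state with parameters a, b, c, θ. -/
def rhoE0 (a b c θ : ℝ) : Matrix (Fin 4) (Fin 4) ℂ :=
  !![0, 0, 0, 0;
     0, (a : ℂ), (c/2 : ℂ) * Complex.exp (θ * Complex.I), 0;
     0, (c/2 : ℂ) * Complex.exp (-θ * Complex.I), (b : ℂ), 0;
     0, 0, 0, ((1 - a - b : ℝ) : ℂ)]

/-- The maximal-CHSH-violation states ρ_MVB. -/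
def rhoMVB (β θ : ℝ) : Matrix (Fin 4) (Fin 4) ℂ :=
  rhoE0 (1/2) (1/2) (Real.sqrt (β - 1)) θ


/-! ### Auxiliary lemmas -/

private lemma hexpP (θ : ℝ) : Complex.exp (θ * Complex.I) = Real.cos θ + Real.sin θ * Complex.I := by
  rw [Complex.exp_mul_I, Complex.ofReal_cos, Complex.ofReal_sin]

private lemma erP (θ : ℝ) : (Complex.exp (-(↑θ * Complex.I))).re = Real.cos θ := by
  rw [show -((θ:ℂ) * Complex.I) = ((-θ:ℝ):ℂ) * Complex.I by push_cast; ring, hexpP]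
  simp [Real.cos_neg, Complex.cos_ofReal_re]

private lemma eiP (θ : ℝ) : (Complex.exp (-(↑θ * Complex.I))).im = -Real.sin θ := by
  rw [show -((θ:ℂ) * Complex.I) = ((-θ:ℝ):ℂ) * Complex.I by push_cast; ring, hexpP]
  simp [Real.sin_neg, Complex.sin_ofReal_re]

private lemma v0P : ((0 : Fin 4) : ℕ) = 0 := rfl
private lemma v1P : ((1 : Fin 4) : ℕ) = 1 := rfl
private lemma v2P : ((2 : Fin 4) : ℕ) = 2 := rfl
private lemma v3P : ((3 : Fin 4) : ℕ) = 3 := rfl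

private lemma vc41 {α : Type*} (x : α) (f : Fin 3 → α) : vecCons x f (1 : Fin 4) = f 0 := rfl
private lemma vc42 {α : Type*} (x : α) (f : Fin 3 → α) : vecCons x f (2 : Fin 4) = f 1 := rfl
private lemma vc43 {α : Type*} (x : α) (f : Fin 3 → α) : vecCons x f (3 : Fin 4) = f 2 := rfl
private lemma vc31 {α : Type*} (x : α) (f : Fin 2 → α) : vecCons x f (1 : Fin 3) = f 0 := rfl
private lemma vc32 {α : Type*} (x : α) (f : Fin 2 → α) : vecCons x f (2 : Fin 3) = f 1 := rfl
private lemma vc21 {α : Type*} (x : α) (f : Fin 1 → α) : vecCons x f (1 : Fin 2) = f 0 := rfl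
private lemma hexpN (θ : ℝ) : Complex.exp (-(Complex.I * θ)) = Real.cos θ - Real.sin θ * Complex.I := by
  rw [show -(Complex.I * (θ:ℂ)) = ((-θ:ℝ):ℂ) * Complex.I by push_cast; ring, hexpP]
  push_cast [Real.cos_neg, Real.sin_neg]; ring

set_option maxHeartbeats 2000000 in
private lemma Tmat_rhoE0 (a b c θ : ℝ) : Tmat (rhoE0 a b c θ) =
    !![c * Real.cos θ, c * Real.sin θ, 0;
       -(c * Real.sin θ), c * Real.cos θ, 0;
       0, 0, 1 - 2*a - 2*b] := by
  ext n m
  fin_cases n <;> fin_cases m <;>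
    norm_num [vc41, vc42, vc43, vc31, vc32, vc21, hexpN, Tmat, Matrix.trace, Matrix.diag, Matrix.mul_apply, Fin.sum_univ_four,
      kron4, pauli, rhoE0, finProdFinEquiv, Fin.divNat, Fin.modNat, hexpP,
      v0P, v1P, v2P, v3P, erP, eiP, Complex.cos_ofReal_re, Complex.sin_ofReal_re,
      Complex.ext_iff] <;> ring

set_option maxHeartbeats 1000000 in
private lemma Umat_rhoE0 (a b c θ : ℝ) : Umat (rhoE0 a b c θ) =
    Matrix.diagonal ![c^2, c^2, (1 - 2*a - 2*b)^2] := by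
  ext i j
  fin_cases i <;> fin_cases j <;>
    simp [Umat, Tmat_rhoE0, Matrix.mul_apply, Fin.sum_univ_three, Matrix.diagonal,
      Matrix.transpose_apply, Matrix.vecHead, Matrix.vecTail] <;>
    first
      | ring1
      | linear_combination (c^2) * (Real.sin_sq_add_cos_sq θ)
      | linear_combination (-(c^2)) * (Real.sin_sq_add_cos_sq θ)

private lemma sum_evalsR {n : ℕ} (A : Matrix (Fin n) (Fin n) ℝ) (hA : A.IsHermitian) :
    ∑ i, evalsR A i = A.trace := by
  simp only [evalsR, dif_pos hA]
  have h2 : A.trace = Matrix.trace ((hA.eigenvectorUnitary : Matrix (Fin n) (Fin n) ℝ) *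
      Matrix.diagonal (RCLike.ofReal ∘ hA.eigenvalues) *
      (star (hA.eigenvectorUnitary : Matrix (Fin n) (Fin n) ℝ))) := by
    conv_lhs => rw [hA.spectral_theorem, Unitary.conjStarAlgAut_apply]
  rw [Matrix.trace_mul_cycle, Unitary.coe_star_mul_self, Matrix.one_mul,
    Matrix.trace_diagonal] at h2
  rw [h2]
  simp

private lemma evalsR_mem {n : ℕ} (d : Fin n → ℝ) (i : Fin n) :
    ∃ j, evalsR (Matrix.diagonal d) i = d j := by
  have hA : (Matrix.diagonal d).IsHermitian := Matrix.isHermitian_diagonal d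
  simp only [evalsR, dif_pos hA]
  have hv := hA.mulVec_eigenvectorBasis i
  have hnz : ⇑(hA.eigenvectorBasis i) ≠ 0 := by
    have := hA.eigenvectorBasis.orthonormal.ne_zero i
    intro h
    exact this (by ext j; exact congrFun h j)
  obtain ⟨j, hj⟩ := Function.ne_iff.mp hnz
  refine ⟨j, ?_⟩
  have := congrFun hv j
  simp only [Matrix.mulVec_diagonal, Pi.smul_apply, smul_eq_mul] at this
  have hj' : (hA.eigenvectorBasis i) j ≠ 0 := hj
  field_simp at this
  exact this.symm

private lemma pair_filter_eq :
    (Finset.univ.filter (fun p : Fin 3 × Fin 3 => p.1 < p.2)) =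
      ({((0:Fin 3),(1:Fin 3)), (0,2), (1,2)} : Finset (Fin 3 × Fin 3)) := by
  ext ⟨i, j⟩
  fin_cases i <;> fin_cases j <;> simp [Finset.mem_filter] <;> decide

private lemma mval_rhoE0 (a b c θ : ℝ) :
    mval (rhoE0 a b c θ) = max (2*c^2) (c^2 + (1-2*a-2*b)^2) := by
  set x := c^2 with hxdef
  set y := (1-2*a-2*b)^2 with hydef
  have hU : Umat (rhoE0 a b c θ) = Matrix.diagonal ![x, x, y] := Umat_rhoE0 a b c θ
  set e : Fin 3 → ℝ := evalsR (Umat (rhoE0 a b c θ)) with hedef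
  have hmem : ∀ i, e i = x ∨ e i = y := by
    intro i
    rw [hedef, hU]
    obtain ⟨j, hj⟩ := evalsR_mem ![x, x, y] i
    fin_cases j <;> simp at hj <;> tauto
  have hsum : e 0 + e 1 + e 2 = 2*x + y := by
    have := sum_evalsR (Umat (rhoE0 a b c θ)) (by rw [hU]; exact Matrix.isHermitian_diagonal _)
    rw [Fin.sum_univ_three] at this
    rw [hedef, this, hU, Matrix.trace_diagonal, Fin.sum_univ_three]
    simp; ring
  have hm : mval (rhoE0 a b c θ) =
      (e 0 + e 1) ⊔ ((e 0 + e 2) ⊔ (e 1 + e 2)) := by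
    rw [mval, Finset.sup'_congr (by rw [pair_filter_eq]; decide) pair_filter_eq
      (fun p _ => rfl)]
    simp [Finset.sup'_insert, Finset.sup'_singleton]
    rfl
  rw [hm]
  rcases hmem 0 with h0 | h0 <;> rcases hmem 1 with h1 | h1 <;> rcases hmem 2 with h2 | h2 <;>
    rw [h0, h1, h2] at hsum ⊢ <;>
    simp only [max_def] <;> split_ifs <;> linarith

set_option maxHeartbeats 1000000 in
private lemma linEntropy_rhoE0 (a b c θ : ℝ) :
    linEntropy (rhoE0 a b c θ) = (4/3) * (1 - (a^2 + b^2 + (1-a-b)^2 + c^2/2)) := by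
  have h : (((rhoE0 a b c θ) * (rhoE0 a b c θ)).trace).re
      = a^2 + b^2 + (1-a-b)^2 + c^2/2 := by
    simp [rhoE0, Matrix.trace, Matrix.diag, Matrix.mul_apply, Fin.sum_univ_four, hexpP,
      Complex.cos_ofReal_re, Complex.sin_ofReal_re, erP, eiP]
    linear_combination (c^2/2) * (Real.sin_sq_add_cos_sq θ)
  rw [linEntropy, h]

set_option maxHeartbeats 2000000 in
/-- the maximizers of m(ρ) in class E₀ at fixed linear entropy s
lie on the curve s = (2/3)(1 − c²) and are exactly the states ρ_MVB;
moreover m(ρ_MVB) = β. -/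
theorem rhoE0_max_CHSH_violation (s : ℝ) (hs0 : 0 ≤ s) (hs1 : s ≤ 2/3) :
    (∀ a b c θ : ℝ, 0 ≤ a → 0 ≤ b → a + b ≤ 1 → 0 ≤ c → c ≤ 1 →
      c ^ 2 / 4 ≤ a * b → linEntropy (rhoE0 a b c θ) = s →
      mval (rhoE0 a b c θ) ≤ 2 - (3/2) * s) ∧
    (∀ a b c θ : ℝ, 0 ≤ a → 0 ≤ b → a + b ≤ 1 → 0 ≤ c → c ≤ 1 →
      c ^ 2 / 4 ≤ a * b → linEntropy (rhoE0 a b c θ) = s →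
      mval (rhoE0 a b c θ) = 2 - (3/2) * s →
      a = 1/2 ∧ b = 1/2 ∧ s = (2/3) * (1 - c ^ 2) ∧
        rhoE0 a b c θ = rhoMVB (1 + c ^ 2) θ) ∧
    (∀ β θ : ℝ, 1 ≤ β → β ≤ 2 → mval (rhoMVB β θ) = β) := by
  refine ⟨?_, ?_, ?_⟩
  · intro a b c θ ha hb hab hc hc1 hcab hlin
    rw [linEntropy_rhoE0] at hlin
    rw [mval_rhoE0]
    apply max_le <;> nlinarith [sq_nonneg (a-b), sq_nonneg (1-a-b), sq_nonneg (a+b-1)]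
  · intro a b c θ ha hb hab hc hc1 hcab hlin heq
    rw [linEntropy_rhoE0] at hlin
    rw [mval_rhoE0] at heq
    have hA : 2*c^2 ≤ 2 - 3/2 * s := by
      nlinarith [sq_nonneg (a-b), sq_nonneg (1-a-b)]
    have hB : c^2 + (1-2*a-2*b)^2 ≤ 2 - 3/2 * s := by
      nlinarith [sq_nonneg (a-b), sq_nonneg (a+b-1)]
    have hab2 : a = 1/2 ∧ b = 1/2 := by
      rcases max_choice (2*c^2) (c^2 + (1-2*a-2*b)^2) with hch | hch <;> rw [hch] at heq
      · -- 2c² is the max and equals RHS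
        have h1 : (a-b)^2 = 0 := le_antisymm (by nlinarith [sq_nonneg (1-a-b)]) (sq_nonneg _)
        have h2 : (1-a-b)^2 = 0 := le_antisymm (by nlinarith [sq_nonneg (a-b)]) (sq_nonneg _)
        have h1' : a - b = 0 := by
          have := sq_eq_zero_iff.mp h1; linarith [this]
        have h2' : 1 - a - b = 0 := by
          have := sq_eq_zero_iff.mp h2; linarith [this]
        constructor <;> linarith
      · have h1 : (a-b)^2 = 0 := le_antisymm (by nlinarith [sq_nonneg (a+b-1), sq_nonneg (a+b)]) (sq_nonneg _)
        have h1' : a - b = 0 := by have := sq_eq_zero_iff.mp h1; linarith [this]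
        have h2 : (a+b-1)^2 = 0 := le_antisymm (by nlinarith [sq_nonneg (a-b)]) (sq_nonneg _)
        have h2' : a + b - 1 = 0 := by have := sq_eq_zero_iff.mp h2; linarith [this]
        constructor <;> linarith
    obtain ⟨ha2, hb2⟩ := hab2
    subst ha2; subst hb2
    refine ⟨rfl, rfl, by linarith, ?_⟩
    rw [rhoMVB, show (1:ℝ) + c^2 - 1 = c^2 by ring, Real.sqrt_sq hc]
  · intro β θ hb1 hb2
    rw [rhoMVB, mval_rhoE0, Real.sq_sqrt (by linarith : (0:ℝ) ≤ β - 1)]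
    rw [show (1 - 2*(1/2:ℝ) - 2*(1/2))^2 = 1 by norm_num]
    rw [max_eq_right (by linarith)]
    ring


end
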